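/- For integers t, k, v, m with k ≥ t ≥ 2, v ≥ 2 and 2 ≤ m ≤ v^t, and a real number ε with 0 < ε ≤ 1, any natural number N satisfying N ≥ ln(C(v^t, m−1)/ε) / ln(v^t/(m−1)) admits an ε-almost partial m-covering array APCA(N; t, k, v, m, ε); i.e., there exists an array A : Fin N → Fin k → Fin v such that for at least (1−ε)·C(k,t) of the t-subsets C of columns, the rows of A restricted to C take at least m distinct values in (Fin v)^C. Note the bound on N is independent of k. -/

import Mathlib

/-!
A uniformly random `N × k` array fails on a fixed `t`-set of columns `C` only if all its rows,
restricted to `C`, lie in one of the `C(v^t, m-1)` sets of `m - 1` tuples; so at most a fraction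
`C(v^t, m-1) ((m-1)/v^t)^N ≤ ε` of all arrays fail on `C`, and the bound on `N` is exactly what
makes this last inequality hold. Averaging over the `C(k,t)` column sets, some array fails on
at most `ε C(k,t)` of them.
-/

/-- The number of distinct `t`-tuples `x : C → Fin v` covered by the rows of the array `A`
restricted to the column set `C`. -/
noncomputable def coverCount {N k v : ℕ} (A : Fin N → Fin k → Fin v) (C : Finset (Fin k)) : ℕ :=
  Nat.card {x : C → Fin v // ∃ i : Fin N, (fun j : C => A i j) = x}

open Finset

theorem card_filter_restrict_mem {ι β : Type*} [Fintype ι] [DecidableEq ι] [Fintype β]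
    [DecidableEq β] (C : Finset ι) (T : Finset (C → β)) :
    #{r : ι → β | (fun j : C => r j) ∈ T} = #T * Fintype.card β ^ (Fintype.card ι - #C) := by
  let e := Equiv.piEquivPiSubtypeProd (· ∈ C) (fun _ => β)
  have : ({r : ι → β | (fun j : C => r j) ∈ T} : Finset _).map e.toEmbedding = T ×ˢ univ := by
    ext ⟨x, y⟩
    simp [e]
  rw [← card_map e.toEmbedding, this, card_product, card_univ, Fintype.card_fun,
    Fintype.card_subtype_compl, Fintype.card_coe]

theorem card_filter_card_image_comp_le {ι R γ : Type*} [Fintype ι] [DecidableEq ι] [Fintype R]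
    [Fintype γ] [DecidableEq γ] (ρ : R → γ) {n : ℕ} (hn : n ≤ Fintype.card γ) :
    #{A : ι → R | #(univ.image (ρ ∘ A)) ≤ n}
      ≤ ∑ T ∈ powersetCard n (univ : Finset γ), #{r | ρ r ∈ T} ^ Fintype.card ι := by
  classical
  have hcover : ({A : ι → R | #(univ.image (ρ ∘ A)) ≤ n} : Finset _)
      ⊆ (powersetCard n univ).biUnion fun T => Fintype.piFinset fun _ => {r | ρ r ∈ T} := by
    intro A hA
    obtain ⟨T, hAT, -, hT⟩ := exists_subsuperset_card_eq (subset_univ _) (mem_filter.1 hA).2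
      (by rwa [card_univ])
    simp only [mem_biUnion, mem_powersetCard, Fintype.mem_piFinset, mem_filter_univ]
    exact ⟨T, ⟨subset_univ _, hT⟩, fun i => hAT (mem_image_of_mem _ (mem_univ i))⟩
  calc _ ≤ _ := card_le_card hcover
    _ ≤ _ := card_biUnion_le
    _ = _ := by simp only [Fintype.card_piFinset, prod_const, card_univ]

theorem coverCount_eq_card_image {N k v : ℕ} (A : Fin N → Fin k → Fin v) (C : Finset (Fin k)) :
    coverCount A C = #(univ.image fun i (j : C) => A i j) := by
  classical
  rw [coverCount, ← Set.coe_ofPred, ← Set.range.eq_1,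
    Nat.card_eq_card_finite_toFinset (Set.finite_range _)]
  simp only [Set.toFinite_toFinset, Set.toFinset_range]

theorem card_filter_coverCount_le {N k v t n : ℕ} (hn : n ≤ v ^ t) (C : Finset (Fin k))
    (hC : #C = t) :
    #{A : Fin N → Fin k → Fin v | coverCount A C ≤ n}
      ≤ (v ^ t).choose n * (n * v ^ (k - t)) ^ N := by
  have hcard : Fintype.card (C → Fin v) = v ^ t := by simp [hC]
  simp_rw [coverCount_eq_card_image]
  calc _ ≤ _ := card_filter_card_image_comp_le (ι := Fin N)
        (fun (r : Fin k → Fin v) (j : C) => r j) (hcard ▸ hn)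
    _ = _ := by
      rw [sum_congr rfl fun T hT => by rw [card_filter_restrict_mem, (mem_powersetCard.1 hT).2]]
      simp [hC, hcard]

theorem natCard_coverCount_ge_add_card_filter_lt {N k v : ℕ} (A : Fin N → Fin k → Fin v)
    (t m : ℕ) :
    Nat.card {C : Finset (Fin k) // C.card = t ∧ m ≤ coverCount A C}
      + #{C ∈ powersetCard t univ | coverCount A C < m} = k.choose t := by
  have : Nat.card {C : Finset (Fin k) // C.card = t ∧ m ≤ coverCount A C}
      = #{C ∈ powersetCard t univ | m ≤ coverCount A C} := by
    rw [Nat.card_eq_fintype_card, Fintype.card_subtype]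
    congr 1
    ext C
    simp only [mem_filter, mem_univ, true_and, mem_powersetCard_univ]
  simp only [this, ← not_le, card_filter_add_card_filter_not, card_powersetCard, card_univ,
    Fintype.card_fin]

theorem exists_card_filter_mul_le {Ω κ : Type*} [Fintype Ω] [Nonempty Ω] (P : Finset κ)
    (bad : Ω → κ → Prop) [∀ A C, Decidable (bad A C)] (B : ℕ)
    (hB : ∀ C ∈ P, #{A | bad A C} ≤ B) :
    ∃ A, #{C ∈ P | bad A C} * Fintype.card Ω ≤ #P * B := by
  have hdouble : ∑ A, #{C ∈ P | bad A C} ≤ #P * B := by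
    calc ∑ A, #{C ∈ P | bad A C} = ∑ C ∈ P, #{A | bad A C} := by
          simp only [card_filter]; exact sum_comm
      _ ≤ #P * B := by simpa using sum_le_card_nsmul P _ B hB
  obtain ⟨A, -, hA⟩ := exists_le_of_sum_le (s := univ) univ_nonempty
    (f := fun A => #{C ∈ P | bad A C} * Fintype.card Ω) (g := fun _ => #P * B) (by
      rw [← sum_mul, sum_const, card_univ, smul_eq_mul, mul_comm]
      exact Nat.mul_le_mul_left _ hdouble)
  exact ⟨A, hA⟩

theorem mul_pow_le_mul_pow_of_log_div_le {c ε q Q : ℝ} {N : ℕ} (hc : 0 < c) (hε : 0 < ε)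
    (hq : 0 < q) (hqQ : q < Q) (hN : Real.log (c / ε) / Real.log (Q / q) ≤ N) :
    c * q ^ N ≤ ε * Q ^ N := by
  have hlog : 0 < Real.log (Q / q) := Real.log_pos ((one_lt_div hq).2 hqQ)
  have hQ : 0 < Q := hq.trans hqQ
  have : c / ε ≤ (Q / q) ^ N := by
    rw [← Real.log_le_log_iff (by positivity) (by positivity), Real.log_pow]
    exact (div_le_iff₀ hlog).1 hN
  rw [div_pow, div_le_div_iff₀ hε (by positivity)] at this
  linarith

theorem choose_mul_pow_le {t k v m N : ℕ} {ε : ℝ} (htk : t ≤ k) (hm1 : 2 ≤ m) (hm2 : m ≤ v ^ t)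
    (hε0 : 0 < ε)
    (hN : Real.log (((v ^ t).choose (m - 1) : ℝ) / ε) /
        Real.log ((v : ℝ) ^ t / ((m : ℝ) - 1)) ≤ (N : ℝ)) :
    (((v ^ t).choose (m - 1) * ((m - 1) * v ^ (k - t)) ^ N : ℕ) : ℝ)
      ≤ ε * ((v : ℝ) ^ k) ^ N := by
  have hchoose : (0 : ℝ) < (v ^ t).choose (m - 1) := by
    exact_mod_cast Nat.choose_pos (by omega)
  have hm1' : (2 : ℝ) ≤ m := by exact_mod_cast hm1
  have hm2' : (m : ℝ) ≤ (v : ℝ) ^ t := by exact_mod_cast hm2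
  have key := mul_pow_le_mul_pow_of_log_div_le hchoose hε0 (by linarith) (by linarith) hN
  push_cast [Nat.cast_sub (by omega : 1 ≤ m)]
  calc _ = (v ^ t).choose (m - 1) * ((m : ℝ) - 1) ^ N * ((v : ℝ) ^ (k - t)) ^ N := by
        rw [mul_pow, mul_assoc]
    _ ≤ ε * ((v : ℝ) ^ t) ^ N * ((v : ℝ) ^ (k - t)) ^ N := by gcongr
    _ = ε * ((v : ℝ) ^ k) ^ N := by
        rw [mul_assoc, ← mul_pow, ← pow_add, Nat.add_sub_cancel' htk]

theorem stmt_2_general (t k v m N : ℕ) (ε : ℝ) (htk : t ≤ k) (hv : 2 ≤ v)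
    (hm1 : 2 ≤ m) (hm2 : m ≤ v ^ t) (hε0 : 0 < ε)
    (hN : Real.log (((v ^ t).choose (m - 1) : ℝ) / ε) /
        Real.log ((v : ℝ) ^ t / ((m : ℝ) - 1)) ≤ (N : ℝ)) :
    ∃ A : Fin N → Fin k → Fin v,
      (1 - ε) * (k.choose t : ℝ) ≤
        (Nat.card {C : Finset (Fin k) // C.card = t ∧ m ≤ coverCount A C} : ℝ) := by
  have : NeZero v := ⟨by omega⟩
  obtain ⟨A, hA⟩ := exists_card_filter_mul_le (Ω := Fin N → Fin k → Fin v)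
    (powersetCard t univ) (fun A C => coverCount A C < m) _ fun C hC =>
      (card_le_card (monotone_filter_right _ fun _ _ h => Nat.le_sub_one_of_lt h)).trans
        (card_filter_coverCount_le (by omega) C (mem_powersetCard.1 hC).2)
  refine ⟨A, ?_⟩
  have hbad : (#{C ∈ powersetCard t univ | coverCount A C < m} : ℝ) ≤ ε * k.choose t := by
    have hV : (0 : ℝ) < ((v : ℝ) ^ k) ^ N := by positivity
    refine le_of_mul_le_mul_right ?_ hV
    calc _ ≤ (k.choose t : ℝ) * ((v ^ t).choose (m - 1) * ((m - 1) * v ^ (k - t)) ^ N : ℕ) := by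
          simpa [Fintype.card_fun] using (Nat.cast_le (α := ℝ)).2 hA
      _ ≤ (k.choose t : ℝ) * (ε * ((v : ℝ) ^ k) ^ N) :=
          mul_le_mul_of_nonneg_left (choose_mul_pow_le htk hm1 hm2 hε0 hN) (by positivity)
      _ = _ := by ring
  rw [← natCard_coverCount_ge_add_card_filter_lt A t m] at hbad ⊢
  push_cast at hbad ⊢
  linarith

theorem stmt_2 (t k v m N : ℕ) (ε : ℝ) (ht : 2 ≤ t) (htk : t ≤ k) (hv : 2 ≤ v)
    (hm1 : 2 ≤ m) (hm2 : m ≤ v ^ t) (hε0 : 0 < ε) (hε1 : ε ≤ 1)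
    (hN : Real.log (((v ^ t).choose (m - 1) : ℝ) / ε) /
        Real.log ((v : ℝ) ^ t / ((m : ℝ) - 1)) ≤ (N : ℝ)) :
    ∃ A : Fin N → Fin k → Fin v,
      (1 - ε) * (k.choose t : ℝ) ≤
        (Nat.card {C : Finset (Fin k) // C.card = t ∧ m ≤ coverCount A C} : ℝ) :=
  stmt_2_general t k v m N ε htk hv hm1 hm2 hε0 hN
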